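/- arXiv:2411.04477 — 9 statements merged into one kernel-verified Lean document; each statement's English description precedes it below -/
import Mathlib

section
/- Let Q be a medial quandle. Then for all a, x, y, z in Q: ((a*x) *⁻¹ y) * z = ((a*z) *⁻¹ y) * x. -/
/-- A quandle: a set with a binary operation `op` such that `op x x = x`,
for each `y` the map `x ↦ op x y` is a bijection with inverse `x ↦ opInv x y`,
and `op` is right self-distributive. -/
class Quandle' (Q : Type*) where
  op : Q → Q → Q
  opInv : Q → Q → Q
  op_idem : ∀ x : Q, op x x = x
  opInv_op : ∀ x y : Q, opInv (op x y) y = x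
  op_opInv : ∀ x y : Q, op (opInv x y) y = x
  op_distrib : ∀ x y z : Q, op (op x y) z = op (op x z) (op y z)

/-- A medial quandle: a quandle satisfying `(x₁*y₁)*(x₂*y₂) = (x₁*x₂)*(y₁*y₂)`. -/
class MedialQuandle' (Q : Type*) extends Quandle' Q where
  medial : ∀ x₁ y₁ x₂ y₂ : Q, op (op x₁ y₁) (op x₂ y₂) = op (op x₁ x₂) (op y₁ y₂)

open Quandle'

/-- The map `f_{x,y}(q) = (q *⁻¹ x) * y`. -/
def fq {Q : Type*} [Quandle' Q] (x y q : Q) : Q := op (opInv q x) y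

theorem stmt_7 {Q : Type*} [MedialQuandle' Q] (a x y z : Q) :
    op (opInv (op a x) y) z = op (opInv (op a z) y) x := by
  set b := opInv (op a x) y with hb
  set c := opInv (op a z) y with hc
  have hby : op b y = op a x := op_opInv _ _
  have hcy : op c y = op a z := op_opInv _ _
  have h1 : op (op b z) (op y x) = op (op a z) x := by
    have := MedialQuandle'.medial b y z x
    rw [hby] at this
    rw [← this, ← op_distrib]
  have h2 : op (op c x) (op y x) = op (op a z) x := by
    have := MedialQuandle'.medial c y x x
    rw [hcy, op_idem] at this
    exact this.symm
  have h3 : op (op b z) (op y x) = op (op c x) (op y x) := h1.trans h2.symm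
  calc op b z = opInv (op (op b z) (op y x)) (op y x) := (opInv_op _ _).symm
    _ = opInv (op (op c x) (op y x)) (op y x) := by rw [h3]
    _ = op c x := opInv_op _ _
end

section
/- Let Q be a medial quandle. Then for all x, y, a, b in Q the maps f_{x,y} and f_{a,b} commute: f_{x,y}(f_{a,b}(q)) = f_{a,b}(f_{x,y}(q)) for every q in Q. -/
open Quandle'

section lemmas
variable {Q : Type*} [MedialQuandle' Q]

lemma opInv_idem (x : Q) : opInv x x = x := by
  have h := opInv_op x x
  rwa [op_idem] at h

/-- M2 -/
lemma medial2 (p q r s : Q) :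
    opInv (op p q) (op r s) = op (opInv p r) (opInv q s) := by
  have h : op (op (opInv p r) (opInv q s)) (op r s) = op p q := by
    rw [MedialQuandle'.medial, op_opInv, op_opInv]
  rw [← h, opInv_op]

/-- M3 -/
lemma medial3 (p q r s : Q) :
    op (opInv p q) (opInv r s) = opInv (op p r) (op q s) := by
  have h : op (op (opInv p q) (opInv r s)) (op q s) = op p r := by
    rw [MedialQuandle'.medial, op_opInv, op_opInv]
  rw [← h, opInv_op]

/-- M4 -/
lemma medial4 (p q r s : Q) :
    opInv (opInv p q) (opInv r s) = opInv (opInv p r) (opInv q s) := by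
  have h : op (opInv (opInv p r) (opInv q s)) (opInv r s) = opInv p q := by
    rw [medial3, op_opInv, op_opInv]
  rw [← h, opInv_op]

end lemmas

theorem stmt_9 {Q : Type*} [MedialQuandle' Q] (x y a b : Q) (q : Q) :
    fq x y (fq a b q) = fq a b (fq x y q) := by
  simp only [fq]
  calc op (opInv (op (opInv q a) b) x) y
      = op (op (opInv (opInv q a) x) (opInv b x)) y := by
        conv_lhs => rw [← op_idem x, medial2]
    _ = op (op (opInv (opInv q x) (opInv a x)) (opInv b x)) y := by
        conv_lhs => rw [← opInv_idem x, medial4, opInv_idem]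
    _ = op (op (opInv (opInv q x) (opInv a x)) (opInv y x)) b := by
        conv_lhs => rw [← op_opInv y x, MedialQuandle'.medial, op_opInv]
    _ = op (opInv (op (opInv q x) y) a) b := by
        rw [medial3, op_opInv]
end

section
/- Let Q be a medial quandle, let (x₁,y₁), …, (x_k,y_k) be pairs of elements of Q, and let σ be any permutation of {1, …, k}. Then the compositions f_{x₁,y₁} ∘ f_{x₂,y₂} ∘ ⋯ ∘ f_{x_k,y_k} and f_{x_{σ(1)},y_{σ(1)}} ∘ f_{x_{σ(2)},y_{σ(2)}} ∘ ⋯ ∘ f_{x_{σ(k)},y_{σ(k)}} are equal as maps Q → Q. -/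
open Quandle'

/-- Composition `f_{x₁,y₁} ∘ f_{x₂,y₂} ∘ ⋯ ∘ f_{x_k,y_k}` of the maps associated to a
list of pairs of quandle elements. -/
def compChain {Q : Type*} [Quandle' Q] : List (Q × Q) → (Q → Q)
  | [] => id
  | p :: l => fq p.1 p.2 ∘ compChain l

section Aux

variable {Q : Type*} [MedialQuandle' Q]

/-- Right translation by `z` as a permutation. -/
def Rp (z : Q) : Equiv.Perm Q where
  toFun q := op q z
  invFun q := opInv q z
  left_inv q := opInv_op q z
  right_inv q := op_opInv q z

lemma Rp_inv_apply (z q : Q) : (Rp z)⁻¹ q = opInv q z := rfl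

lemma star (x y c : Q) : Rp (op x c) * Rp y = Rp (op y c) * Rp x := by
  ext q
  exact MedialQuandle'.medial q y x c

/-- `R_u R_y = R_{y*u} R_u` (distributivity). -/
lemma distR (u y : Q) : Rp u * Rp y = Rp (op y u) * Rp u := by
  have := star u y u
  rwa [op_idem] at this

/-- `R_u⁻¹ R_v = R_{v \p u} R_u⁻¹`. -/
lemma lemC (u v : Q) : (Rp u)⁻¹ * Rp v = Rp (opInv v u) * (Rp u)⁻¹ := by
  have h := distR u (opInv v u)
  rw [op_opInv] at h
  calc (Rp u)⁻¹ * Rp v = (Rp u)⁻¹ * (Rp v * Rp u) * (Rp u)⁻¹ := by group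
    _ = (Rp u)⁻¹ * (Rp u * Rp (opInv v u)) * (Rp u)⁻¹ := by rw [h]
    _ = Rp (opInv v u) * (Rp u)⁻¹ := by group

/-- `R_{a÷u}⁻¹ R_u⁻¹ = R_u⁻¹ R_a⁻¹`. -/
lemma lemB (u a : Q) : (Rp (opInv a u))⁻¹ * (Rp u)⁻¹ = (Rp u)⁻¹ * (Rp a)⁻¹ := by
  have h := distR u (opInv a u)
  rw [op_opInv] at h
  calc (Rp (opInv a u))⁻¹ * (Rp u)⁻¹ = (Rp u * Rp (opInv a u))⁻¹ := by group
    _ = (Rp a * Rp u)⁻¹ := by rw [h]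
    _ = (Rp u)⁻¹ * (Rp a)⁻¹ := by group

/-- `R_v R_{a÷u} = R_a R_{v÷u}`. -/
lemma lemS (u a v : Q) : Rp v * Rp (opInv a u) = Rp a * Rp (opInv v u) := by
  have h := star (opInv v u) (opInv a u) u
  rwa [op_opInv, op_opInv] at h

/-- `R_a⁻¹ R_v = R_{v÷u} R_{a÷u}⁻¹`. -/
lemma lemD (u a v : Q) : (Rp a)⁻¹ * Rp v = Rp (opInv v u) * (Rp (opInv a u))⁻¹ := by
  have h := lemS u a v
  calc (Rp a)⁻¹ * Rp v
      = (Rp a)⁻¹ * (Rp v * Rp (opInv a u)) * (Rp (opInv a u))⁻¹ := by group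
    _ = (Rp a)⁻¹ * (Rp a * Rp (opInv v u)) * (Rp (opInv a u))⁻¹ := by rw [h]
    _ = Rp (opInv v u) * (Rp (opInv a u))⁻¹ := by group

lemma tden (a v u : Q) :
    (Rp a)⁻¹ * Rp v * (Rp u)⁻¹ = (Rp u)⁻¹ * Rp v * (Rp a)⁻¹ := by
  calc (Rp a)⁻¹ * Rp v * (Rp u)⁻¹
      = Rp (opInv v u) * ((Rp (opInv a u))⁻¹ * (Rp u)⁻¹) := by rw [lemD u a v]; group
    _ = Rp (opInv v u) * ((Rp u)⁻¹ * (Rp a)⁻¹) := by rw [lemB]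
    _ = (Rp (opInv v u) * (Rp u)⁻¹) * (Rp a)⁻¹ := by group
    _ = ((Rp u)⁻¹ * Rp v) * (Rp a)⁻¹ := by rw [← lemC]

lemma tnum (b u v : Q) :
    Rp b * (Rp u)⁻¹ * Rp v = Rp v * (Rp u)⁻¹ * Rp b := by
  calc Rp b * (Rp u)⁻¹ * Rp v
      = Rp b * (Rp (opInv v u) * (Rp u)⁻¹) := by rw [← lemC]; group
    _ = (Rp b * Rp (opInv v u)) * (Rp u)⁻¹ := by group
    _ = (Rp v * Rp (opInv b u)) * (Rp u)⁻¹ := by rw [lemS u b v]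
    _ = Rp v * (Rp (opInv b u) * (Rp u)⁻¹) := by group
    _ = Rp v * ((Rp u)⁻¹ * Rp b) := by rw [← lemC]
    _ = Rp v * (Rp u)⁻¹ * Rp b := by group

lemma perm_comm (a b u v : Q) :
    (Rp b * (Rp a)⁻¹) * (Rp v * (Rp u)⁻¹) = (Rp v * (Rp u)⁻¹) * (Rp b * (Rp a)⁻¹) := by
  calc (Rp b * (Rp a)⁻¹) * (Rp v * (Rp u)⁻¹)
      = Rp b * ((Rp a)⁻¹ * Rp v * (Rp u)⁻¹) := by group
    _ = Rp b * ((Rp u)⁻¹ * Rp v * (Rp a)⁻¹) := by rw [tden]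
    _ = (Rp b * (Rp u)⁻¹ * Rp v) * (Rp a)⁻¹ := by group
    _ = (Rp v * (Rp u)⁻¹ * Rp b) * (Rp a)⁻¹ := by rw [tnum]
    _ = (Rp v * (Rp u)⁻¹) * (Rp b * (Rp a)⁻¹) := by group

lemma fq_eq (a b : Q) : fq a b = ⇑(Rp b * (Rp a)⁻¹) := by
  funext q
  rfl

lemma fq_comm (a b u v : Q) : fq a b ∘ fq u v = fq u v ∘ fq a b := by
  rw [fq_eq, fq_eq, ← Equiv.Perm.coe_mul, ← Equiv.Perm.coe_mul, perm_comm]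

/-- The map associated to a pair, as an element of `Function.End Q`. -/
def FEnd (p : Q × Q) : Function.End Q := fq p.1 p.2

/-- `compChain` as a product in `Function.End Q`. -/
lemma compChain_eq_prod (l : List (Q × Q)) :
    compChain l = ((l.map FEnd).prod : Function.End Q) := by
  induction l with
  | nil => rfl
  | cons p l ih =>
    simp only [compChain, List.map_cons, List.prod_cons, ih]
    rfl

lemma pairwise_all {α : Type*} {R : α → α → Prop} (h : ∀ a b, R a b) :
    ∀ l : List α, l.Pairwise R
  | [] => .nil
  | a :: l => .cons (fun b _ => h a b) (pairwise_all h l)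

end Aux

theorem stmt_10 {Q : Type*} [MedialQuandle' Q] (k : ℕ) (x y : Fin k → Q)
    (σ : Equiv.Perm (Fin k)) :
    compChain (List.ofFn fun i => (x i, y i)) =
      compChain (List.ofFn fun i => (x (σ i), y (σ i))) := by
  rw [compChain_eq_prod, compChain_eq_prod]
  have hperm : List.Perm ((List.ofFn fun i => (x (σ i), y (σ i))).map FEnd)
      ((List.ofFn fun i => (x i, y i)).map FEnd) :=
    List.Perm.map _ (Equiv.Perm.ofFn_comp_perm σ (fun i => (x i, y i)))
  have hc : ((List.ofFn fun i => (x (σ i), y (σ i))).map FEnd).Pairwise Commute := by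
    apply List.Pairwise.map (R := fun _ _ : Q × Q => True)
    · intro p r _
      show (fq p.1 p.2 : Q → Q) ∘ fq r.1 r.2 = (fq r.1 r.2 : Q → Q) ∘ fq p.1 p.2
      exact fq_comm _ _ _ _
    · exact pairwise_all (fun _ _ => trivial) _
  exact (hperm.prod_eq' hc).symm
end

section
/- Let Q be a medial quandle. Then for all x, y in Q the map f_{x,y} is an endomorphism for both operations: f_{x,y}(a*b) = f_{x,y}(a) * f_{x,y}(b) and f_{x,y}(a *⁻¹ b) = f_{x,y}(a) *⁻¹ f_{x,y}(b) for all a, b in Q. -/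
open Quandle'

lemma opInv_distrib {Q : Type*} [Quandle' Q] (a b x : Q) :
    opInv (op a b) x = op (opInv a x) (opInv b x) := by
  have h : op (op (opInv a x) (opInv b x)) x = op a b := by
    rw [op_distrib, op_opInv, op_opInv]
  rw [← h, opInv_op]

lemma fq_op {Q : Type*} [MedialQuandle' Q] (x y a b : Q) :
    fq x y (op a b) = op (fq x y a) (fq x y b) := by
  unfold fq
  rw [opInv_distrib, MedialQuandle'.medial, op_idem]

theorem stmt_11 {Q : Type*} [MedialQuandle' Q] (x y : Q) (a b : Q) :
    fq x y (op a b) = op (fq x y a) (fq x y b) ∧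
    fq x y (opInv a b) = opInv (fq x y a) (fq x y b) := by
  refine ⟨fq_op x y a b, ?_⟩
  have h : op (fq x y (opInv a b)) (fq x y b) = fq x y a := by
    rw [← fq_op, op_opInv]
  rw [← h, opInv_op]
end

section
/- Let Q be a medial quandle. Then for all x, y, i, j in Q the composition f_{j,i} ∘ f_{y,x} ∘ f_{i,j} ∘ f_{x,y} is the identity map of Q: f_{j,i}(f_{y,x}(f_{i,j}(f_{x,y}(q)))) = q for every q in Q. -/
open Quandle'

section Aux
variable {Q : Type*}

lemma op_right_cancel' [Quandle' Q] {a b : Q} (z : Q) (h : op a z = op b z) : a = b := by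
  have := congrArg (fun t => opInv t z) h
  simpa [opInv_op] using this

lemma opInv_right_cancel' [Quandle' Q] {a b : Q} (z : Q) (h : opInv a z = opInv b z) : a = b := by
  have := congrArg (fun t => op t z) h
  simpa [op_opInv] using this

lemma divDistrib' [Quandle' Q] (p r z : Q) :
    opInv (op p r) z = op (opInv p z) (opInv r z) := by
  have h : op (op (opInv p z) (opInv r z)) z = op p r := by
    rw [op_distrib, op_opInv, op_opInv]
  rw [← h, opInv_op]

/-- Medial identity in the form `R_c ∘ R_d⁻¹ ∘ R_b = R_b ∘ R_d⁻¹ ∘ R_c`. -/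
lemma medM' [MedialQuandle' Q] (p b c d : Q) :
    op (opInv (op p b) d) c = op (opInv (op p c) d) b := by
  rw [divDistrib', divDistrib']
  calc op (op (opInv p d) (opInv b d)) c
      = op (op (opInv p d) (opInv b d)) (op (opInv c d) d) := by rw [op_opInv]
    _ = op (op (opInv p d) (opInv c d)) (op (opInv b d) d) := MedialQuandle'.medial _ _ _ _
    _ = op (op (opInv p d) (opInv c d)) b := by rw [op_opInv]

/-- The inverse form: `R_b⁻¹ ∘ R_d ∘ R_c⁻¹ = R_c⁻¹ ∘ R_d ∘ R_b⁻¹`. -/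
lemma medMinv' [MedialQuandle' Q] (p b c d : Q) :
    opInv (op (opInv p c) d) b = opInv (op (opInv p b) d) c := by
  set s := opInv (op (opInv p c) d) b with hs
  set t := opInv (op (opInv p b) d) c with ht
  have hsp : op (opInv (op s c) d) b = p := by
    rw [medM' s c b d, hs, op_opInv, opInv_op, op_opInv]
  have htp : op (opInv (op t c) d) b = p := by
    rw [ht, op_opInv, opInv_op, op_opInv]
  have h1 : opInv (op s c) d = opInv (op t c) d := op_right_cancel' b (hsp.trans htp.symm)
  have h2 : op s c = op t c := opInv_right_cancel' d h1
  exact op_right_cancel' c h2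

/-- The maps `f_{x,y}` pairwise commute in a medial quandle. -/
lemma fq_comm' [MedialQuandle' Q] (x y i j q : Q) :
    fq i j (fq x y q) = fq x y (fq i j q) := by
  show op (opInv (op (opInv q x) y) i) j = op (opInv (op (opInv q i) j) x) y
  rw [medM' (opInv q x) y j i, medMinv' q x i j]

lemma fq_inv' [Quandle' Q] (x y q : Q) : fq y x (fq x y q) = q := by
  simp [fq, opInv_op, op_opInv]

end Aux

theorem stmt_13 {Q : Type*} [MedialQuandle' Q] (x y i j : Q) (q : Q) :
    fq j i (fq y x (fq i j (fq x y q))) = q := by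
  rw [fq_comm' x y i j q, fq_inv' x y, fq_inv' i j]
end

section
/- Let Q be a medial quandle. Then for all n, m, x, y in Q: (n * (y*x)) *⁻¹ x = (n *⁻¹ x) * y, and (m *⁻¹ ((x *⁻¹ y) * x)) * (y*x) = (m *⁻¹ x) * y. (These are the equations expressing that in the coloring of structure ①, the two lower output arcs equal f_{x,y}(n) and f_{x,y}(m) respectively.) -/
open Quandle'

theorem stmt_16 {Q : Type*} [MedialQuandle' Q] (n m x y : Q) :
    opInv (op n (op y x)) x = op (opInv n x) y ∧
    op (opInv m (op (opInv x y) x)) (op y x) = op (opInv m x) y := by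
  constructor
  · have h : op n (op y x) = op (op (opInv n x) y) x := by
      rw [op_distrib, op_opInv]
    rw [h, opInv_op]
  · set p := opInv (opInv m x) (opInv x y) with hp
    have hm : m = op (op p x) (op (opInv x y) x) := by
      rw [MedialQuandle'.medial, op_idem, hp, op_opInv, op_opInv]
    have ha : opInv m (op (opInv x y) x) = op p x := by
      rw [hm, opInv_op]
    rw [ha]
    have h1 : op (op p x) (op y x) = op (op p y) x := (op_distrib p y x).symm
    have h2 : op (opInv m x) y = op (op p y) x := by
      conv_lhs => rw [show opInv m x = op p (opInv x y) from (op_opInv _ _).symm]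
      rw [op_distrib, op_opInv]
    rw [h1, h2]
end

section
/- Let Q be a medial quandle. Then for all x, y, m in Q: (y *⁻¹ m) *⁻¹ ((x*y) *⁻¹ m) = ((y *⁻¹ x) * y) *⁻¹ m. Consequently, for all n in Q, ((y *⁻¹ m) *⁻¹ ((x*y) *⁻¹ m)) * n = f_{m,n}(f_{x,y}(y)). (This is the equation expressing that in the coloring of structure ②, the second output arc equals f_{m,n}(f_{x,y}(y)).) -/
open Quandle'

lemma opInv_hom {Q : Type*} [Quandle' Q] (a b c : Q) :
    opInv (op a b) c = op (opInv a c) (opInv b c) := by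
  have h : op (op (opInv a c) (opInv b c)) c = op a b := by
    rw [op_distrib, op_opInv, op_opInv]
  calc opInv (op a b) c = opInv (op (op (opInv a c) (opInv b c)) c) c := by rw [h]
    _ = op (opInv a c) (opInv b c) := opInv_op _ _

theorem stmt_17 {Q : Type*} [MedialQuandle' Q] (x y m : Q) :
    opInv (opInv y m) (opInv (op x y) m) = opInv (op (opInv y x) y) m ∧
    (∀ n : Q, op (opInv (opInv y m) (opInv (op x y) m)) n = fq m n (fq x y y)) := by
  have key : op (opInv (op (opInv y x) y) m) (opInv (op x y) m) = opInv y m := by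
    rw [← opInv_hom, MedialQuandle'.medial, op_opInv, op_idem, op_idem]
  have h1 : opInv (opInv y m) (opInv (op x y) m) = opInv (op (opInv y x) y) m := by
    calc opInv (opInv y m) (opInv (op x y) m)
        = opInv (op (opInv (op (opInv y x) y) m) (opInv (op x y) m)) (opInv (op x y) m) := by
          rw [key]
      _ = opInv (op (opInv y x) y) m := opInv_op _ _
  exact ⟨h1, fun n => by rw [h1]; rfl⟩
end

section
/- Let Q be a medial quandle, let m, n be elements of Q, and let g : Q → Q be a map satisfying g(a*b) = g(a)*g(b) and g(a *⁻¹ b) = g(a) *⁻¹ g(b) for all a, b in Q, and which commutes with f_{m,n}, i.e. g(f_{m,n}(q)) = f_{m,n}(g(q)) for all q in Q. Set x = g(n) and y = g(m). Then f_{m,n}(f_{x,y}(x)) = x and f_{m,n}(f_{x,y}(y)) = y; explicitly, ((x*y) *⁻¹ m) * n = x and (((y *⁻¹ x) * y) *⁻¹ m) * n = y. -/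
open Quandle'

theorem stmt_18 {Q : Type*} [MedialQuandle' Q] (m n : Q) (g : Q → Q)
    (hop : ∀ a b : Q, g (op a b) = op (g a) (g b))
    (hopInv : ∀ a b : Q, g (opInv a b) = opInv (g a) (g b))
    (hcomm : ∀ q : Q, g (fq m n q) = fq m n (g q)) :
    fq m n (fq (g n) (g m) (g n)) = g n ∧
    fq m n (fq (g n) (g m) (g m)) = g m ∧
    op (opInv (op (g n) (g m)) m) n = g n ∧
    op (opInv (op (opInv (g m) (g n)) (g m)) m) n = g m := by
  have hself : ∀ a : Q, opInv a a = a := fun a => by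
    nth_rewrite 1 [← op_idem a]; rw [opInv_op]
  have key : ∀ q : Q, fq m n (g q) = op (opInv (g q) (g m)) (g n) := fun q => by
    rw [← hcomm, fq, hop, hopInv]
  have h1 : fq m n (fq (g n) (g m) (g n)) = g n := by
    rw [show fq (g n) (g m) (g n) = g (op n m) by rw [fq, hself, ← hop]]
    rw [key, hop, opInv_op, op_idem]
  have h2 : fq m n (fq (g n) (g m) (g m)) = g m := by
    rw [show fq (g n) (g m) (g m) = g (op (opInv m n) m) by rw [fq, ← hopInv, ← hop]]
    rw [key, hop, hopInv, opInv_op, op_opInv]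
  refine ⟨h1, h2, ?_, ?_⟩
  · have := h1; rwa [fq, fq, hself] at this
  · have := h2; rwa [fq, fq] at this
end

section
/- Let Q be a quandle such that the relation ∼ on Q defined by a ∼ b ⟺ a*b = a is symmetric and transitive (hence an equivalence relation, since reflexivity holds automatically). Then for all x, y₁, y₂, z in Q, the system of crossing equations of the connected sum of two Hopf links, namely x*y₁ = x, y₁*x = y₂, y₂*z = y₁, and z*y₂ = z, holds if and only if y₁ = y₂, x*y₁ = x, and y₁*z = y₁ (i.e. y₁ = y₂ and x ∼ y₁ ∼ z). -/
open Quandle'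

theorem stmt_19 {Q : Type*} [Quandle' Q]
    (hsymm : ∀ a b : Q, op a b = a → op b a = b)
    (htrans : ∀ a b c : Q, op a b = a → op b c = b → op a c = a)
    (x y₁ y₂ z : Q) :
    (op x y₁ = x ∧ op y₁ x = y₂ ∧ op y₂ z = y₁ ∧ op z y₂ = z) ↔
      (y₁ = y₂ ∧ op x y₁ = x ∧ op y₁ z = y₁) := by
  constructor
  · rintro ⟨h1, h2, h3, h4⟩
    have hy : op y₁ x = y₁ := hsymm x y₁ h1
    have : y₁ = y₂ := by rw [← h2, hy]
    subst this
    exact ⟨rfl, h1, h3⟩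
  · rintro ⟨h0, h1, h2⟩
    subst h0
    exact ⟨h1, by rw [hsymm x y₁ h1], h2, hsymm y₁ z h2⟩
end
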